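/- arXiv:2109.06516 — 3 statements merged into one kernel-verified Lean document; each statement's English description precedes it below -/
import Mathlib

section
/- Let pL < pU and fL < fU be real numbers, and suppose (p, f, m) satisfies all four McCormick inequalities for the box [pL, pU] × [fL, fU]. Then p ∈ [pL, pU] and f ∈ [fL, fU]. -/
theorem mccormick_forces_box (pL pU fL fU p f m : ℝ)
    (hpb : pL < pU) (hfb : fL < fU)
    (h1 : pL * f + p * fL - pL * fL ≤ m)
    (h2 : pU * f + p * fU - pU * fU ≤ m)
    (h3 : m ≤ pU * f + p * fL - pU * fL)
    (h4 : m ≤ pL * f + p * fU - pL * fU) :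
    p ∈ Set.Icc pL pU ∧ f ∈ Set.Icc fL fU := by
  constructor <;> constructor <;> nlinarith [h1.trans h3, h1.trans h4, h2.trans h3, h2.trans h4]
end

section
/- The maximum over (p,f) ∈ [pL,pU]×[fL,fU] of the difference p·f − max(pL·f + p·fL − pL·fL, pU·f + p·fU − pU·fU) is exactly (pU − pL)(fU − fL)/4, attained at the midpoint p = (pL+pU)/2, f = (fL+fU)/2. -/
private lemma mccormick_aux (pL pU fL fU p f : ℝ)
    (hp1 : pL ≤ p) (hp2 : p ≤ pU) (hf1 : fL ≤ f) (hf2 : f ≤ fU)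
    (hle : (p - pL) * (f - fL) ≤ (pU - p) * (fU - f)) :
    (p - pL) * (f - fL) ≤ (pU - pL) * (fU - fL) / 4 := by
  have hA : (0:ℝ) ≤ pU - pL := by linarith
  have hB : (0:ℝ) ≤ fU - fL := by linarith
  have hx : (0:ℝ) ≤ (p - pL) * (f - fL) :=
    mul_nonneg (by linarith) (by linarith)
  have h1 : (p - pL) * (pU - p) ≤ (pU - pL) ^ 2 / 4 := by
    nlinarith [sq_nonneg (2 * p - pL - pU)]
  have h2 : (f - fL) * (fU - f) ≤ (fU - fL) ^ 2 / 4 := by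
    nlinarith [sq_nonneg (2 * f - fL - fU)]
  have hxp : (0:ℝ) ≤ (p - pL) * (pU - p) :=
    mul_nonneg (by linarith) (by linarith)
  have hxf : (0:ℝ) ≤ (f - fL) * (fU - f) :=
    mul_nonneg (by linarith) (by linarith)
  have hprod : ((p - pL) * (pU - p)) * ((f - fL) * (fU - f)) ≤
      ((pU - pL) ^ 2 / 4) * ((fU - fL) ^ 2 / 4) :=
    mul_le_mul h1 h2 hxf (by positivity)
  have hsq : ((p - pL) * (f - fL)) * ((p - pL) * (f - fL)) ≤
      ((p - pL) * (f - fL)) * ((pU - p) * (fU - f)) :=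
    mul_le_mul_of_nonneg_left hle hx
  nlinarith [mul_nonneg hA hB, hx, hsq, hprod]

theorem mccormick_lower_envelope_worst_case_gap (pL pU fL fU : ℝ)
    (hp : pL ≤ pU) (hf : fL ≤ fU) :
    IsGreatest
      {g : ℝ | ∃ p ∈ Set.Icc pL pU, ∃ f ∈ Set.Icc fL fU,
        g = p * f - max (pL * f + p * fL - pL * fL) (pU * f + p * fU - pU * fU)}
      ((pU - pL) * (fU - fL) / 4) ∧
    ((pL + pU) / 2) * ((fL + fU) / 2) -
        max (pL * ((fL + fU) / 2) + ((pL + pU) / 2) * fL - pL * fL)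
            (pU * ((fL + fU) / 2) + ((pL + pU) / 2) * fU - pU * fU) =
      (pU - pL) * (fU - fL) / 4 := by
  have hmid : ((pL + pU) / 2) * ((fL + fU) / 2) -
        max (pL * ((fL + fU) / 2) + ((pL + pU) / 2) * fL - pL * fL)
            (pU * ((fL + fU) / 2) + ((pL + pU) / 2) * fU - pU * fU) =
      (pU - pL) * (fU - fL) / 4 := by
    have h : pL * ((fL + fU) / 2) + ((pL + pU) / 2) * fL - pL * fL =
        pU * ((fL + fU) / 2) + ((pL + pU) / 2) * fU - pU * fU := by ring
    rw [h, max_self]; ring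
  refine ⟨⟨⟨(pL + pU) / 2, ⟨by linarith, by linarith⟩,
      (fL + fU) / 2, ⟨by linarith, by linarith⟩, hmid.symm⟩, ?_⟩, hmid⟩
  rintro g ⟨p, ⟨hp1, hp2⟩, f, ⟨hf1, hf2⟩, rfl⟩
  rcases max_cases (pL * f + p * fL - pL * fL) (pU * f + p * fU - pU * fU) with
    ⟨h1, h2⟩ | ⟨h1, h2⟩ <;> rw [h1]
  · have hle : (p - pL) * (f - fL) ≤ (pU - p) * (fU - f) := by nlinarith [h2]
    have := mccormick_aux pL pU fL fU p f hp1 hp2 hf1 hf2 hle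
    nlinarith [this]
  · have hle : (pU - p) * (fU - f) ≤ (p - pL) * (f - fL) := by nlinarith [h2]
    have := mccormick_aux (-pU) (-pL) (-fU) (-fL) (-p) (-f)
      (by linarith) (by linarith) (by linarith) (by linarith) (by nlinarith [hle])
    nlinarith [this]
end

section
/- Under the hypotheses that B ∩ S(θ) ≠ ∅ for every parameter θ making P(θ) feasible, B ∩ S̄(θ) = ∅ for every θ making P(θ) infeasible, and complete projectability holds, the relaxed problem P₁(θ) is feasible if and only if the original problem P(θ) is feasible. -/
/-- Under the paper's conditions (1)–(3), the relaxed problem `P₁(θ)` is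
feasible if and only if the original problem `P(θ)` is feasible. -/
theorem relaxation_feasibility_iff
    {D : ℕ} {Y Θ : Type*}
    (C : Θ → (Fin D → ℝ) → (Fin D → ℝ) → (Fin D → ℝ) → Y → Prop)
    (B : Set ((Fin D → ℝ) × (Fin D → ℝ)))
    (Mc : (Fin D → ℝ) → (Fin D → ℝ) → (Fin D → ℝ) → Prop)
    (hMc₁ : ∀ p f m, (p, f) ∈ B → (∀ d, m d = p d * f d) → Mc p f m)
    (hMc₂ : ∀ p f m, Mc p f m → (p, f) ∈ B)
    (S : Θ → Set ((Fin D → ℝ) × (Fin D → ℝ)))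
    (hS : ∀ θ, S θ = {pf | ∃ m y, C θ pf.1 pf.2 m y ∧ ∀ d, m d = pf.1 d * pf.2 d})
    (Sbar : Θ → Set ((Fin D → ℝ) × (Fin D → ℝ)))
    (hSbar : ∀ θ, Sbar θ = {pf | ∃ m y, C θ pf.1 pf.2 m y})
    -- condition (1)
    (hBS : ∀ θ, (∃ p f m y, C θ p f m y ∧ ∀ d, m d = p d * f d) →
      (B ∩ S θ).Nonempty)
    -- condition (2)
    (hBSbar : ∀ θ, (¬ ∃ p f m y, C θ p f m y ∧ ∀ d, m d = p d * f d) →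
      B ∩ Sbar θ = ∅)
    -- condition (3): complete projectability
    (hproj : ∀ θ p f m y, C θ p f m y → Mc p f m →
      ∃ p' m', C θ p' f m' y ∧ ∀ d, m' d = p' d * f d) :
    ∀ θ, (∃ p f m y, C θ p f m y ∧ Mc p f m) ↔
      (∃ p f m y, C θ p f m y ∧ ∀ d, m d = p d * f d) := by
  intro θ
  constructor
  · rintro ⟨p, f, m, y, hC, hM⟩
    obtain ⟨p', m', hC', hb⟩ := hproj θ p f m y hC hM
    exact ⟨p', f, m', y, hC', hb⟩
  · rintro hfeas
    obtain ⟨⟨p, f⟩, hB, hSθ⟩ := hBS θ hfeas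
    rw [hS] at hSθ
    obtain ⟨m, y, hC, hb⟩ := hSθ
    exact ⟨p, f, m, y, hC, hMc₁ p f m hB hb⟩
end
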